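/- arXiv:1707.06576 — 7 statements merged into one kernel-verified Lean document; each statement's English description precedes it below -/
import Mathlib

section
/- Let a > 0, let A be a real m × n matrix and b ∈ ℝᵐ, and suppose x* ∈ SOL(A,b) satisfies P_a(x*) ≤ P_a(x) for all x ∈ SOL(A,b) (x* is a least fraction solution). Then x* is an extreme point of the convex set SOL(A,b): there do not exist distinct y, z ∈ SOL(A,b) and η ∈ (0,1) with x* = η y + (1−η) z. -/
open Matrix Filter Topology

noncomputable def rho (a t : ℝ) : ℝ := a * |t| / (a * |t| + 1)

noncomputable def Pa {n : ℕ} (a : ℝ) (x : Fin n → ℝ) : ℝ := ∑ i, rho a (x i)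

open scoped Classical in
noncomputable def l0 {n : ℕ} (x : Fin n → ℝ) : ℕ :=
  (Finset.univ.filter fun i => x i ≠ 0).card

def SOL {m n : ℕ} (A : Matrix (Fin m) (Fin n) ℝ) (b : Fin m → ℝ) : Set (Fin n → ℝ) :=
  {x | A.mulVec x = b ∧ 0 ≤ x}

noncomputable def sqN {n : ℕ} (v : Fin n → ℝ) : ℝ := ∑ i, (v i) ^ 2

def projPos {n : ℕ} (v : Fin n → ℝ) : Fin n → ℝ := fun i => max 0 (v i)

noncomputable def C1 {m n : ℕ} (A : Matrix (Fin m) (Fin n) ℝ) (b : Fin m → ℝ)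
    (lam a : ℝ) (x : Fin n → ℝ) : ℝ :=
  sqN (A.mulVec x - b) + lam * Pa a x

noncomputable def C2 {m n : ℕ} (A : Matrix (Fin m) (Fin n) ℝ) (b : Fin m → ℝ)
    (lam a mu : ℝ) (x z : Fin n → ℝ) : ℝ :=
  mu * (C1 A b lam a x - sqN (A.mulVec x - A.mulVec z)) + sqN (x - z)

noncomputable def Bmu {m n : ℕ} (A : Matrix (Fin m) (Fin n) ℝ) (b : Fin m → ℝ)
    (mu : ℝ) (z : Fin n → ℝ) : Fin n → ℝ :=
  z + mu • (Aᵀ.mulVec (b - A.mulVec z))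


lemma rho_strict (a : ℝ) (ha : 0 < a) (s t η : ℝ) (hs : 0 ≤ s) (ht : 0 ≤ t)
    (hst : s ≠ t) (h1 : 0 < η) (h2 : η < 1) :
    η * rho a s + (1 - η) * rho a t < rho a (η * s + (1 - η) * t) := by
  have hc : 0 ≤ η * s + (1 - η) * t := by nlinarith
  unfold rho
  rw [abs_of_nonneg hs, abs_of_nonneg ht, abs_of_nonneg hc]
  have h3 : 0 < a * s + 1 := by nlinarith
  have h4 : 0 < a * t + 1 := by nlinarith
  have h5 : 0 < a * (η * s + (1 - η) * t) + 1 := by nlinarith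
  have hne : a * s - a * t ≠ 0 := by
    intro h; apply hst; nlinarith [sub_eq_zero.mp h]
  have h6 : 0 < (a * s - a * t) ^ 2 := by positivity
  have hkey : 0 < η * (1 - η) * (a * s - a * t) ^ 2 :=
    mul_pos (mul_pos h1 (by linarith)) h6
  rw [mul_div_assoc', mul_div_assoc', div_add_div _ _ h3.ne' h4.ne',
    div_lt_div_iff₀ (mul_pos h3 h4) h5]
  nlinarith [hkey, mul_pos h3 h4]

theorem stmt3 {m n : ℕ} (a : ℝ) (ha : 0 < a)
    (A : Matrix (Fin m) (Fin n) ℝ) (b : Fin m → ℝ)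
    (xstar : Fin n → ℝ) (hx : xstar ∈ SOL A b)
    (hmin : ∀ x ∈ SOL A b, Pa a xstar ≤ Pa a x) :
    ¬ ∃ y ∈ SOL A b, ∃ z ∈ SOL A b, y ≠ z ∧
        ∃ η : ℝ, 0 < η ∧ η < 1 ∧ xstar = η • y + (1 - η) • z := by
  rintro ⟨y, hy, z, hz, hyz, η, hη0, hη1, hxe⟩
  have hy0 : ∀ i, 0 ≤ y i := fun i => hy.2 i
  have hz0 : ∀ i, 0 ≤ z i := fun i => hz.2 i
  obtain ⟨j, hj⟩ := Function.ne_iff.mp hyz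
  have hlt : η * Pa a y + (1 - η) * Pa a z < Pa a xstar := by
    unfold Pa
    rw [Finset.mul_sum, Finset.mul_sum, ← Finset.sum_add_distrib]
    apply Finset.sum_lt_sum
    · intro i _
      rcases eq_or_ne (y i) (z i) with h | h
      · have : xstar i = y i := by rw [hxe]; simp [h]; ring
        rw [this, h]; nlinarith [le_refl (rho a (z i))]
      · have := rho_strict a ha (y i) (z i) η (hy0 i) (hz0 i) h hη0 hη1
        have hxi : xstar i = η * y i + (1 - η) * z i := by rw [hxe]; simp
        rw [hxi]; linarith
    · refine ⟨j, Finset.mem_univ j, ?_⟩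
      have := rho_strict a ha (y j) (z j) η (hy0 j) (hz0 j) hj hη0 hη1
      have hxi : xstar j = η * y j + (1 - η) * z j := by rw [hxe]; simp
      rw [hxi]; exact this
  have h1 := hmin y hy
  have h2 := hmin z hz
  nlinarith [hlt, h1, h2]
end

section
/- Let A be a real m × n matrix of full row rank with m < n, let b ∈ ℝᵐ, and suppose SOL(A,b) is nonempty. Then there exists a constant â > 0 and a point x̂ ∈ SOL(A,b) such that x̂ minimizes P_â over SOL(A,b) and x̂ also minimizes the ℓ₀-norm over SOL(A,b); that is, P_â(x̂) ≤ P_â(x) for all x ∈ SOL(A,b) and ‖x̂‖₀ ≤ ‖x‖₀ for all x ∈ SOL(A,b). -/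
open Matrix Filter Topology

/-!
For `a ≥ 0`, `P_a` is concave and monotone on the nonnegative orthant. Hence a feasible point
whose support columns are dependent can be pushed along a kernel direction to the boundary of
`SOL(A,b)` without increasing `P_a`, and with a smaller support; iterating ends at a basic
feasible solution. There are finitely many of these, and `P_a ≤ ‖·‖₀` with `P_a → ‖·‖₀`
pointwise as `a → ∞`. So for large `a`, a minimizer of `P_a` over the basic solutions cannot
have a larger support than the sparsest one, and it minimizes both `P_a` and `‖·‖₀`.
-/

section FractionFunction

variable {a : ℝ}

lemma rho_eq_one_sub_inv (ha : 0 ≤ a) (t : ℝ) : rho a t = 1 - (a * |t| + 1)⁻¹ := by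
  have : a * |t| + 1 ≠ 0 := by positivity
  rw [rho]
  field_simp
  ring

lemma rho_le_ite (ha : 0 ≤ a) (t : ℝ) : rho a t ≤ if t = 0 then 0 else 1 := by
  split_ifs with ht
  · simp [rho, ht]
  · rw [rho_eq_one_sub_inv ha]
    have : 0 ≤ (a * |t| + 1)⁻¹ := by positivity
    linarith

lemma tendsto_rho_atTop (t : ℝ) :
    Tendsto (fun a => rho a t) atTop (𝓝 (if t = 0 then 0 else 1)) := by
  split_ifs with ht
  · simp [rho, ht]
  have hden : Tendsto (fun a => a * |t| + 1) atTop atTop :=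
    tendsto_atTop_add_const_right _ _ (tendsto_id.atTop_mul_const (abs_pos.2 ht))
  have hlim : Tendsto (fun a => 1 - (a * |t| + 1)⁻¹) atTop (𝓝 1) := by
    simpa using (tendsto_inv_atTop_zero.comp hden).const_sub 1
  refine hlim.congr' ?_
  filter_upwards [eventually_ge_atTop 0] with a ha
  exact (rho_eq_one_sub_inv ha t).symm

lemma monotoneOn_rho (ha : 0 ≤ a) : MonotoneOn (rho a) (Set.Ici 0) := by
  intro s (hs : 0 ≤ s) t (ht : 0 ≤ t) hst
  rw [rho_eq_one_sub_inv ha, rho_eq_one_sub_inv ha, abs_of_nonneg hs, abs_of_nonneg ht]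
  gcongr

lemma concaveOn_rho (ha : 0 ≤ a) : ConcaveOn ℝ (Set.Ici 0) (rho a) := by
  refine ⟨convex_Ici 0, fun u (hu : 0 ≤ u) v (hv : 0 ≤ v) l k hl hk hlk => ?_⟩
  obtain rfl : k = 1 - l := by linarith
  have hc : 0 ≤ l * u + (1 - l) * v := by nlinarith
  simp only [smul_eq_mul]
  rw [rho_eq_one_sub_inv ha, rho_eq_one_sub_inv ha, rho_eq_one_sub_inv ha,
    abs_of_nonneg hu, abs_of_nonneg hv, abs_of_nonneg hc]
  set p := a * u
  set q := a * v
  have hp : 0 ≤ p := by positivity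
  have hq : 0 ≤ q := by positivity
  have hr : a * (l * u + (1 - l) * v) = l * p + (1 - l) * q := by ring
  rw [hr]
  have h1 : 0 < p + 1 := by linarith
  have h2 : 0 < q + 1 := by linarith
  have h3 : 0 < l * p + (1 - l) * q + 1 := by nlinarith
  field_simp
  nlinarith [mul_nonneg (mul_nonneg hl hk) (sq_nonneg (p - q))]

end FractionFunction

section Penalty

variable {n : ℕ}

lemma l0_eq_ncard_support (x : Fin n → ℝ) : l0 x = (Function.support x).ncard := by
  classical
  rw [Set.ncard_eq_toFinset_card', l0]
  congr 1
  ext i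
  simp

lemma l0_lt_l0_of_support_ssubset {x y : Fin n → ℝ}
    (h : Function.support y ⊂ Function.support x) : l0 y < l0 x := by
  rw [l0_eq_ncard_support, l0_eq_ncard_support]
  exact Set.ncard_lt_ncard h

lemma l0_eq_sum_ite (x : Fin n → ℝ) : (l0 x : ℝ) = ∑ i, if x i = 0 then 0 else 1 := by
  classical
  simp [l0, Finset.sum_ite]

lemma Pa_le_l0 {a : ℝ} (ha : 0 ≤ a) (x : Fin n → ℝ) : Pa a x ≤ l0 x := by
  rw [l0_eq_sum_ite]
  exact Finset.sum_le_sum fun i _ => rho_le_ite ha (x i)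

lemma tendsto_Pa_atTop (x : Fin n → ℝ) : Tendsto (fun a => Pa a x) atTop (𝓝 (l0 x)) := by
  rw [l0_eq_sum_ite]
  exact tendsto_finsetSum _ fun i _ => tendsto_rho_atTop (x i)

lemma Pa_le_Pa_of_le {a : ℝ} (ha : 0 ≤ a) {x y : Fin n → ℝ} (hy : 0 ≤ y) (hyx : y ≤ x) :
    Pa a y ≤ Pa a x :=
  Finset.sum_le_sum fun i _ => monotoneOn_rho ha (hy i) ((hy i).trans (hyx i)) (hyx i)

lemma concaveOn_Pa {a : ℝ} (ha : 0 ≤ a) : ConcaveOn ℝ (Set.Ici 0) (Pa a : (Fin n → ℝ) → ℝ) := by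
  refine ⟨convex_Ici 0, fun x (hx : 0 ≤ x) y (hy : 0 ≤ y) u v hu hv huv => ?_⟩
  simp only [Pa, smul_eq_mul, Finset.mul_sum, ← Finset.sum_add_distrib]
  exact Finset.sum_le_sum fun i _ => (concaveOn_rho ha).2 (hx i) (hy i) hu hv huv

end Penalty

lemma eventually_lt_Pa_of_lt_l0 {n : ℕ} {s : Set (Fin n → ℝ)} (hs : s.Finite) (k : ℕ) :
    ∀ᶠ a in atTop, ∀ v ∈ s, k < l0 v → (k : ℝ) < Pa a v := by
  refine hs.eventually_all.2 fun v _ => ?_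
  by_cases hk : k < l0 v
  · filter_upwards [(tendsto_Pa_atTop v).eventually_const_lt (u := (k : ℝ)) (by exact_mod_cast hk)]
      with a ha using fun _ => ha
  · exact Eventually.of_forall fun _ h => absurd h hk

section BasicSolutions

variable {m n : ℕ} {A : Matrix (Fin m) (Fin n) ℝ} {b : Fin m → ℝ} {x : Fin n → ℝ} {a : ℝ}

/-- The columns of `A` indexed by the support of `x` are linearly independent. -/
def IsBasic (A : Matrix (Fin m) (Fin n) ℝ) (x : Fin n → ℝ) : Prop :=
  ∀ d : Fin n → ℝ, A *ᵥ d = 0 → Function.support d ⊆ Function.support x → d = 0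

lemma finite_setOf_mem_SOL_isBasic (A : Matrix (Fin m) (Fin n) ℝ) (b : Fin m → ℝ) :
    {x | x ∈ SOL A b ∧ IsBasic A x}.Finite := by
  refine Set.Finite.of_finite_image (f := Function.support) (Set.toFinite _) ?_
  intro x hx y hy hxy
  have hsupp : Function.support (x - y) ⊆ Function.support x :=
    (Function.support_sub x y).trans (by rw [← hxy, Set.union_self])
  exact sub_eq_zero.1 (hx.2 (x - y) (by rw [mulVec_sub, hx.1.1, hy.1.1, sub_self]) hsupp)

/-- Ratio test: move from `x` along `e` until the first coordinate hits zero. -/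
lemma exists_add_smul_mem_SOL_support_ssubset {e : Fin n → ℝ} (hx : x ∈ SOL A b)
    (hAe : A *ᵥ e = 0) (he : Function.support e ⊆ Function.support x) {j : Fin n}
    (hj : e j < 0) :
    ∃ t : ℝ, 0 < t ∧ x + t • e ∈ SOL A b ∧ Function.support (x + t • e) ⊂ Function.support x := by
  classical
  obtain ⟨i₀, hi₀, hmin⟩ := Finset.exists_min_image (Finset.univ.filter fun i => e i < 0)
    (fun i => x i / -e i) ⟨j, by simpa using hj⟩
  have hei₀ : e i₀ < 0 := by simpa using hi₀
  have hxi₀ : 0 < x i₀ := (hx.2 i₀).lt_of_ne' (he hei₀.ne)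
  set t := x i₀ / -e i₀
  have ht : 0 < t := div_pos hxi₀ (neg_pos.2 hei₀)
  have hti₀ : x i₀ + t * e i₀ = 0 := by
    have := hei₀.ne
    simp only [t]
    field_simp
    ring
  have hsupp : Function.support (x + t • e) ⊆ Function.support x :=
    (Function.support_add _ _).trans
      (Set.union_subset subset_rfl ((Function.support_const_smul_subset t e).trans he))
  refine ⟨t, ht, ⟨?_, fun i => ?_⟩, (Set.ssubset_iff_of_subset hsupp).2 ⟨i₀, hxi₀.ne', ?_⟩⟩
  · rw [mulVec_add, mulVec_smul, hAe, smul_zero, add_zero, hx.1]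
  · show 0 ≤ x i + t * e i
    rcases le_or_gt 0 (e i) with hei | hei
    · exact add_nonneg (hx.2 i) (mul_nonneg ht.le hei)
    · have := hmin i (by simpa using hei)
      rw [le_div_iff₀ (neg_pos.2 hei)] at this
      linarith
  · simpa using hti₀

/-- Follow a kernel direction `e` inside the support of `x` both ways to the boundary: `Pa a` is
concave on the orthant, so one of the two end points does not increase it. If `e ≤ 0` there is
only one end point, but `Pa a` is also monotone there. -/
lemma exists_mem_SOL_l0_lt_Pa_le (ha : 0 ≤ a) (hx : x ∈ SOL A b) (hnb : ¬ IsBasic A x) :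
    ∃ y ∈ SOL A b, l0 y < l0 x ∧ Pa a y ≤ Pa a x := by
  simp only [IsBasic, not_forall] at hnb
  obtain ⟨d, hAd, hds, hd0⟩ := hnb
  obtain ⟨e, hAe, hes, j, hj⟩ : ∃ e : Fin n → ℝ, A *ᵥ e = 0 ∧
      Function.support e ⊆ Function.support x ∧ ∃ j, e j < 0 := by
    obtain ⟨j, hj⟩ := Function.ne_iff.1 hd0
    rcases hj.lt_or_gt with h | h
    · exact ⟨d, hAd, hds, j, h⟩
    · exact ⟨-d, by rw [mulVec_neg, hAd, neg_zero], by rwa [Function.support_neg], j, by simpa⟩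
  obtain ⟨t, ht, hy, hyx⟩ := exists_add_smul_mem_SOL_support_ssubset hx hAe hes hj
  by_cases hpos : ∃ i, 0 < e i
  · obtain ⟨i, hi⟩ := hpos
    obtain ⟨s, hs, hz, hzx⟩ := exists_add_smul_mem_SOL_support_ssubset hx
      (by rw [mulVec_neg, hAe, neg_zero]) (by rwa [Function.support_neg]) (j := i)
      (by simpa using hi)
    have hseg : x ∈ segment ℝ (x + t • e) (x + s • -e) := by
      refine ⟨s / (t + s), t / (t + s), by positivity, by positivity, by field_simp; ring, ?_⟩
      ext i
      simp only [Pi.add_apply, Pi.smul_apply, Pi.neg_apply, smul_eq_mul]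
      field_simp
      ring
    rcases min_le_iff.1 ((concaveOn_Pa ha).min_le_of_mem_segment hy.2 hz.2 hseg) with h | h
    · exact ⟨_, hy, l0_lt_l0_of_support_ssubset hyx, h⟩
    · exact ⟨_, hz, l0_lt_l0_of_support_ssubset hzx, h⟩
  · simp only [not_exists, not_lt] at hpos
    refine ⟨_, hy, l0_lt_l0_of_support_ssubset hyx, Pa_le_Pa_of_le ha hy.2 fun i => ?_⟩
    simpa using mul_nonpos_of_nonneg_of_nonpos ht.le (hpos i)

lemma exists_isBasic_Pa_le_l0_le (ha : 0 ≤ a) (hx : x ∈ SOL A b) :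
    ∃ v ∈ SOL A b, IsBasic A v ∧ Pa a v ≤ Pa a x ∧ l0 v ≤ l0 x := by
  induction hk : l0 x using Nat.strong_induction_on generalizing x with
  | _ k ih =>
    by_cases hb : IsBasic A x
    · exact ⟨x, hx, hb, le_rfl, hk.le⟩
    obtain ⟨y, hy, hyl, hyP⟩ := exists_mem_SOL_l0_lt_Pa_le ha hx hb
    obtain ⟨v, hv, hvb, hvP, hvl⟩ := ih (l0 y) (hk ▸ hyl) hy rfl
    exact ⟨v, hv, hvb, hvP.trans hyP, hvl.trans (hk ▸ hyl.le)⟩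

end BasicSolutions

theorem stmt4_general {m n : ℕ} (A : Matrix (Fin m) (Fin n) ℝ) (b : Fin m → ℝ)
    (hne : (SOL A b).Nonempty) :
    ∃ ahat : ℝ, 0 < ahat ∧ ∃ xhat ∈ SOL A b,
      (∀ x ∈ SOL A b, Pa ahat xhat ≤ Pa ahat x) ∧
      (∀ x ∈ SOL A b, l0 xhat ≤ l0 x) := by
  set B := {x | x ∈ SOL A b ∧ IsBasic A x}
  have hB : B.Finite := finite_setOf_mem_SOL_isBasic A b
  obtain ⟨x₀, hx₀⟩ := hne
  obtain ⟨v₀, hv₀, hv₀b, -⟩ := exists_isBasic_Pa_le_l0_le le_rfl hx₀ (a := 0)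
  obtain ⟨w, hw, hwmin⟩ := Set.exists_min_image B l0 hB ⟨v₀, hv₀, hv₀b⟩
  obtain ⟨a, ha, hlarge⟩ :=
    ((eventually_gt_atTop 0).and (eventually_lt_Pa_of_lt_l0 hB (l0 w))).exists
  obtain ⟨xhat, hxhat, hxmin⟩ := Set.exists_min_image B (Pa a) hB ⟨w, hw⟩
  have hxl : l0 xhat ≤ l0 w := by
    by_contra! h
    linarith [hlarge xhat hxhat h, hxmin w hw, Pa_le_l0 ha.le w]
  refine ⟨a, ha, xhat, hxhat.1, fun x hx => ?_, fun x hx => ?_⟩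
  · obtain ⟨v, hv, hvb, hvP, -⟩ := exists_isBasic_Pa_le_l0_le ha.le hx
    exact (hxmin v ⟨hv, hvb⟩).trans hvP
  · obtain ⟨v, hv, hvb, -, hvl⟩ := exists_isBasic_Pa_le_l0_le ha.le hx
    exact hxl.trans ((hwmin v ⟨hv, hvb⟩).trans hvl)

theorem stmt4 {m n : ℕ} (A : Matrix (Fin m) (Fin n) ℝ) (b : Fin m → ℝ)
    (hrank : A.rank = m) (hmn : m < n) (hne : (SOL A b).Nonempty) :
    ∃ ahat : ℝ, 0 < ahat ∧ ∃ xhat ∈ SOL A b,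
      (∀ x ∈ SOL A b, Pa ahat xhat ≤ Pa ahat x) ∧
      (∀ x ∈ SOL A b, l0 xhat ≤ l0 x) :=
  stmt4_general A b hne
end

section
/- Let a > 0, let A be a real m × n matrix and b ∈ ℝᵐ. Suppose x* minimizes P_a over SOL(A,b), x⁰ minimizes the ℓ₀-norm over SOL(A,b), and r > 0 is a constant such that r ≤ x*_i for every index i with x*_i > 0. Then ‖x*‖₀ ≤ (1 + 1/(a r)) ‖x⁰‖₀. -/
open Matrix Filter Topology

lemma rho_nonneg (a t : ℝ) (ha : 0 < a) : 0 ≤ rho a t := by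
  unfold rho; positivity

lemma rho_le_one (a t : ℝ) (ha : 0 < a) : rho a t ≤ 1 := by
  unfold rho
  rw [div_le_one (by positivity)]
  linarith

lemma rho_ge (a r t : ℝ) (ha : 0 < a) (hr : 0 < r) (h : r ≤ t) :
    a * r / (a * r + 1) ≤ rho a t := by
  unfold rho
  rw [abs_of_nonneg (by linarith)]
  rw [div_le_div_iff₀ (by positivity) (by nlinarith)]
  nlinarith

theorem stmt5 {m n : ℕ} (a : ℝ) (ha : 0 < a)
    (A : Matrix (Fin m) (Fin n) ℝ) (b : Fin m → ℝ)
    (xstar x0 : Fin n → ℝ) (hxs : xstar ∈ SOL A b) (hx0 : x0 ∈ SOL A b)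
    (hminP : ∀ x ∈ SOL A b, Pa a xstar ≤ Pa a x)
    (hmin0 : ∀ x ∈ SOL A b, l0 x0 ≤ l0 x)
    (r : ℝ) (hr : 0 < r) (hrle : ∀ i, 0 < xstar i → r ≤ xstar i) :
    (l0 xstar : ℝ) ≤ (1 + 1 / (a * r)) * (l0 x0 : ℝ) := by
  classical
  set c := a * r with hc
  have hc0 : 0 < c := by positivity
  have h1 : Pa a x0 ≤ (l0 x0 : ℝ) := by
    unfold Pa l0
    rw [← Finset.sum_filter_of_ne (p := fun i => x0 i ≠ 0)
      (by intro i _ hne h0; exact hne (by simp [h0, rho]))]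
    calc ∑ i ∈ Finset.univ.filter (fun i => x0 i ≠ 0), rho a (x0 i)
        ≤ ∑ _i ∈ Finset.univ.filter (fun i => x0 i ≠ 0), (1:ℝ) :=
          Finset.sum_le_sum (fun i _ => rho_le_one a (x0 i) ha)
      _ = _ := by simp
  have h2 : (l0 xstar : ℝ) * (c / (c + 1)) ≤ Pa a xstar := by
    unfold Pa l0
    have hsub : ∑ i ∈ Finset.univ.filter (fun i => xstar i ≠ 0), rho a (xstar i)
        ≤ ∑ i, rho a (xstar i) :=
      Finset.sum_le_sum_of_subset_of_nonneg (Finset.filter_subset _ _)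
        (fun i _ _ => rho_nonneg a (xstar i) ha)
    refine le_trans ?_ hsub
    have hlb : ∀ i ∈ Finset.univ.filter (fun i => xstar i ≠ 0),
        c / (c + 1) ≤ rho a (xstar i) := by
      intro i hi
      simp only [Finset.mem_filter] at hi
      have hpos : 0 < xstar i := lt_of_le_of_ne (hxs.2 i) (Ne.symm hi.2)
      exact rho_ge a r (xstar i) ha hr (hrle i hpos)
    calc ((Finset.univ.filter (fun i => xstar i ≠ 0)).card : ℝ) * (c / (c + 1))
        = ∑ _i ∈ Finset.univ.filter (fun i => xstar i ≠ 0), c / (c + 1) := by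
          simp [mul_comm]
      _ ≤ _ := Finset.sum_le_sum hlb
  have h3 : Pa a xstar ≤ Pa a x0 := hminP x0 hx0
  have key : (l0 xstar : ℝ) * c ≤ (l0 x0 : ℝ) * (c + 1) := by
    have : (l0 xstar : ℝ) * (c / (c + 1)) ≤ (l0 x0 : ℝ) := by linarith
    rw [mul_div_assoc'] at this
    exact (div_le_iff₀ (by linarith)).mp this
  rw [show (1 + 1 / c) = (c + 1) / c by field_simp]
  rw [div_mul_eq_mul_div, le_div_iff₀ hc0]
  linarith
end

section
/- Let A be a real m × n matrix of full row rank with m < n, let b ∈ ℝᵐ, and suppose SOL(A,b) is nonempty. Let r(A,b) denote the minimum of z_i over all extreme points z of SOL(A,b) and all indices i with z_i > 0, and assume r(A,b) > 0. Then for every a > (min_{x ∈ SOL(A,b)} ‖x‖₀) / r(A,b), every point x* that minimizes P_a over SOL(A,b) also minimizes the ℓ₀-norm over SOL(A,b). -/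
open Matrix Filter Topology

def IsExtremePt {n : ℕ} (S : Set (Fin n → ℝ)) (x : Fin n → ℝ) : Prop :=
  x ∈ S ∧ ¬ ∃ y ∈ S, ∃ z ∈ S, y ≠ z ∧
      ∃ η : ℝ, 0 < η ∧ η < 1 ∧ x = η • y + (1 - η) • z

lemma rho_zero (a : ℝ) : rho a 0 = 0 := by simp [rho]

lemma rho_mono (a s t : ℝ) (ha : 0 < a) (hs : 0 ≤ s) (hst : s ≤ t) : rho a s ≤ rho a t := by
  unfold rho
  rw [abs_of_nonneg hs, abs_of_nonneg (hs.trans hst)]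
  rw [div_le_div_iff₀ (by nlinarith) (by nlinarith)]
  nlinarith

lemma rho_strict_concave (a s t η : ℝ) (ha : 0 < a) (hs : 0 ≤ s) (ht : 0 ≤ t)
    (hst : s ≠ t) (hη0 : 0 < η) (hη1 : η < 1) :
    η * rho a s + (1 - η) * rho a t < rho a (η * s + (1 - η) * t) := by
  unfold rho
  have hm : 0 ≤ η * s + (1 - η) * t := by nlinarith
  rw [abs_of_nonneg hs, abs_of_nonneg ht, abs_of_nonneg hm]
  have h1 : 0 < a * s + 1 := by nlinarith
  have h2 : 0 < a * t + 1 := by nlinarith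
  have h3 : 0 < a * (η * s + (1 - η) * t) + 1 := by nlinarith
  rw [← mul_div_assoc, ← mul_div_assoc, div_add_div _ _ (ne_of_gt h1) (ne_of_gt h2), div_lt_div_iff₀ (by positivity) h3]
  have key : a * (η * s + (1 - η) * t) * ((a * s + 1) * (a * t + 1))
      - (η * (a * s) * (a * t + 1) + (1 - η) * (a * t) * (a * s + 1))
        * (a * (η * s + (1 - η) * t) + 1)
      = η * (1 - η) * (a * s - a * t) ^ 2 := by ring
  have hpos : 0 < η * (1 - η) * (a * s - a * t) ^ 2 := by
    have : a * s - a * t ≠ 0 := by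
      intro h; apply hst; nlinarith
    have h4 : 0 < (a * s - a * t) ^ 2 := by positivity
    have h5 : 0 < 1 - η := by linarith
    positivity
  linarith

lemma rho_concave (a s t η : ℝ) (ha : 0 < a) (hs : 0 ≤ s) (ht : 0 ≤ t)
    (hη0 : 0 < η) (hη1 : η < 1) :
    η * rho a s + (1 - η) * rho a t ≤ rho a (η * s + (1 - η) * t) := by
  rcases eq_or_ne s t with h | h
  · subst h
    have : η * s + (1 - η) * s = s := by ring
    rw [this]; ring_nf; rfl
  · exact (rho_strict_concave a s t η ha hs ht h hη0 hη1).le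

theorem stmt6 {m n : ℕ} (A : Matrix (Fin m) (Fin n) ℝ) (b : Fin m → ℝ)
    (hrank : A.rank = m) (hmn : m < n) (hne : (SOL A b).Nonempty)
    (rAb : ℝ)
    (hrAb : IsLeast {r : ℝ | ∃ z ∈ SOL A b, IsExtremePt (SOL A b) z ∧
              ∃ i : Fin n, 0 < z i ∧ r = z i} rAb)
    (hrpos : 0 < rAb)
    (x0 : Fin n → ℝ) (hx0 : x0 ∈ SOL A b) (hmin0 : ∀ x ∈ SOL A b, l0 x0 ≤ l0 x)
    (a : ℝ) (haa : a > (l0 x0 : ℝ) / rAb)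
    (xstar : Fin n → ℝ) (hxs : xstar ∈ SOL A b)
    (hminP : ∀ x ∈ SOL A b, Pa a xstar ≤ Pa a x) :
    ∀ x ∈ SOL A b, l0 xstar ≤ l0 x := by
  classical
  have ha0 : 0 < a := lt_of_le_of_lt (div_nonneg (Nat.cast_nonneg _) hrpos.le) haa
  -- xstar is an extreme point of SOL A b
  have hext : IsExtremePt (SOL A b) xstar := by
    refine ⟨hxs, ?_⟩
    rintro ⟨y, hy, z, hz, hyz, η, hη0, hη1, hxe⟩
    obtain ⟨j, hj⟩ := Function.ne_iff.mp hyz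
    have hlt : η * Pa a y + (1 - η) * Pa a z < Pa a (η • y + (1 - η) • z) := by
      unfold Pa
      rw [Finset.mul_sum, Finset.mul_sum, ← Finset.sum_add_distrib]
      apply Finset.sum_lt_sum
      · intro i _
        have := rho_concave a (y i) (z i) η ha0 (hy.2 i) (hz.2 i) hη0 hη1
        simpa using this
      · refine ⟨j, Finset.mem_univ j, ?_⟩
        have := rho_strict_concave a (y j) (z j) η ha0 (hy.2 j) (hz.2 j) hj hη0 hη1
        simpa using this
    rw [← hxe] at hlt
    have h1 := hminP y hy
    have h2 := hminP z hz
    nlinarith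
  -- every nonzero entry of xstar is ≥ rAb
  have hlow : ∀ i, xstar i ≠ 0 → rAb ≤ xstar i := by
    intro i hi
    exact hrAb.2 ⟨xstar, hxs, hext, i, lt_of_le_of_ne (hxs.2 i) (Ne.symm hi), rfl⟩
  -- lower bound on Pa a xstar
  have hPx : (l0 xstar : ℝ) * rho a rAb ≤ Pa a xstar := by
    unfold Pa l0
    calc (((Finset.univ.filter fun i => xstar i ≠ 0).card : ℝ)) * rho a rAb
        ≤ ∑ i ∈ Finset.univ.filter fun i => xstar i ≠ 0, rho a (xstar i) := by
          rw [← nsmul_eq_mul]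
          apply Finset.card_nsmul_le_sum
          intro i hi
          exact rho_mono a rAb (xstar i) ha0 hrpos.le
            (hlow i (Finset.mem_filter.mp hi).2)
      _ ≤ ∑ i, rho a (xstar i) := by
          apply Finset.sum_le_sum_of_subset_of_nonneg (Finset.filter_subset _ _)
          intro i _ _
          exact rho_nonneg a (xstar i) ha0
  -- upper bound on Pa a x0
  have hP0 : Pa a x0 ≤ (l0 x0 : ℝ) := by
    unfold Pa l0
    have heq : ∑ i, rho a (x0 i)
        = ∑ i ∈ Finset.univ.filter fun i => x0 i ≠ 0, rho a (x0 i) := by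
      symm
      apply Finset.sum_filter_of_ne
      intro i _ h
      intro h0
      exact h (by rw [h0, rho_zero])
    rw [heq]
    have hle : ∑ i ∈ Finset.univ.filter fun i => x0 i ≠ 0, rho a (x0 i)
        ≤ (Finset.univ.filter fun i => x0 i ≠ 0).card • (1:ℝ) := by
      apply Finset.sum_le_card_nsmul
      intro i _
      exact rho_le_one a (x0 i) ha0
    simpa using hle
  -- chain
  have hchain : (l0 xstar : ℝ) * rho a rAb ≤ (l0 x0 : ℝ) :=
    hPx.trans ((hminP x0 hx0).trans hP0)
  have har : (l0 x0 : ℝ) < a * rAb := (div_lt_iff₀ hrpos).mp haa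
  have hrho : rho a rAb = a * rAb / (a * rAb + 1) := by
    rw [rho, abs_of_nonneg hrpos.le]
  have hden : 0 < a * rAb + 1 := by nlinarith
  have hkey : (l0 xstar : ℝ) * (a * rAb) ≤ (l0 x0 : ℝ) * (a * rAb + 1) := by
    rw [hrho, ← mul_div_assoc, div_le_iff₀ hden] at hchain
    linarith
  have hfin : (l0 xstar : ℝ) < (l0 x0 : ℝ) + 1 := by
    have hpos : 0 < a * rAb := by positivity
    nlinarith
  have : l0 xstar ≤ l0 x0 := by exact_mod_cast Nat.lt_succ_iff.mp (by exact_mod_cast hfin)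
  intro x hx
  exact this.trans (hmin0 x hx)
end

section
/- Let λ > 0 and a > 0, and define the threshold t* by t* = λa/2 if λ ≤ 1/a², and t* = √λ − 1/(2a) if λ > 1/a². Then for every v ∈ ℝ with |v| ≤ t*, the point 0 is a global minimizer over ℝ of the function x ↦ (x − v)² + λ ρ_a(x). -/
open Matrix Filter Topology

/-! Since `v x ≤ |v| |x|`, with `t = |x|` it suffices that `2 |v| ≤ t + λ a / (a t + 1)` for all
`t ≥ 0`. The right-hand side is at least `λ a` when `λ a² ≤ 1`, and at least `2 √λ - 1 / a` by AM-GM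
applied to `u = a t + 1`, i.e. `u / a + λ a / u ≥ 2 √λ`. -/

theorem lam_mul_le_add_div {lam a t : ℝ} (ha : 0 < a) (hla : lam * a ^ 2 ≤ 1) (ht : 0 ≤ t) :
    lam * a ≤ t + lam * a / (a * t + 1) := by
  have hden : 0 < a * t + 1 := by positivity
  rw [← sub_nonneg]
  have key : t + lam * a / (a * t + 1) - lam * a = t * (a * t + 1 - lam * a ^ 2) / (a * t + 1) := by
    field_simp
    ring
  rw [key]
  have : 0 ≤ a * t + 1 - lam * a ^ 2 := by nlinarith [mul_nonneg ha.le ht]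
  positivity

theorem two_mul_sqrt_sub_inv_le_add_div {lam a t : ℝ} (ha : 0 < a) (hl : 0 ≤ lam) (ht : 0 ≤ t) :
    2 * √lam - 1 / a ≤ t + lam * a / (a * t + 1) := by
  have hu : 0 < a * t + 1 := by positivity
  have amgm : 2 * √lam * (a * (a * t + 1)) ≤ (a * t + 1) ^ 2 + lam * a ^ 2 := by
    nlinarith [sq_nonneg (a * t + 1 - a * √lam), Real.sq_sqrt hl]
  have key : t + lam * a / (a * t + 1) + 1 / a = ((a * t + 1) ^ 2 + lam * a ^ 2) / (a * (a * t + 1)) := by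
    field_simp
    ring
  rw [← sub_nonneg, sub_sub_eq_add_sub, sub_nonneg, key, le_div_iff₀ (by positivity)]
  exact amgm

theorem two_mul_threshold_le_add_div {lam a t : ℝ} (ha : 0 < a) (ht : 0 ≤ t) :
    2 * (if lam ≤ 1 / a ^ 2 then lam * a / 2 else √lam - 1 / (2 * a)) ≤
      t + lam * a / (a * t + 1) := by
  split_ifs with hc
  · have hla : lam * a ^ 2 ≤ 1 := by rwa [le_div_iff₀ (by positivity)] at hc
    linarith [lam_mul_le_add_div ha hla ht]
  · have hl : 0 ≤ lam := le_trans (by positivity) (not_le.mp hc).le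
    have h := two_mul_sqrt_sub_inv_le_add_div ha hl ht
    have : 1 / (2 * a) = 1 / a / 2 := by ring
    linarith

theorem sq_le_sub_sq_add_mul_rho {lam a v : ℝ}
    (h : ∀ t, 0 ≤ t → 2 * |v| ≤ t + lam * a / (a * t + 1)) (x : ℝ) :
    v ^ 2 ≤ (x - v) ^ 2 + lam * rho a x := by
  have hx := abs_nonneg x
  have hmul : 2 * |v| * |x| ≤ |x| ^ 2 + lam * rho a x := by
    calc 2 * |v| * |x| ≤ (|x| + lam * a / (a * |x| + 1)) * |x| :=
          mul_le_mul_of_nonneg_right (h |x| hx) hx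
      _ = |x| ^ 2 + lam * rho a x := by unfold rho; ring
  have hvx : v * x ≤ |v| * |x| := (le_abs_self _).trans (abs_mul v x).le
  nlinarith [sq_abs x]

theorem stmt10_general (lam a : ℝ) (ha : 0 < a)
    (tstar : ℝ)
    (htstar : tstar = if lam ≤ 1 / a ^ 2 then lam * a / 2 else Real.sqrt lam - 1 / (2 * a))
    (v : ℝ) (hv : |v| ≤ tstar) :
    ∀ x : ℝ, ((0 : ℝ) - v) ^ 2 + lam * rho a 0 ≤ (x - v) ^ 2 + lam * rho a x := by
  intro x
  have hrho0 : rho a 0 = 0 := by simp [rho]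
  rw [hrho0, mul_zero, add_zero, zero_sub, neg_sq]
  refine sq_le_sub_sq_add_mul_rho (fun t ht => ?_) x
  have := two_mul_threshold_le_add_div (lam := lam) ha ht
  rw [← htstar] at this
  linarith

theorem stmt10 (lam a : ℝ) (hl : 0 < lam) (ha : 0 < a)
    (tstar : ℝ)
    (htstar : tstar = if lam ≤ 1 / a ^ 2 then lam * a / 2 else Real.sqrt lam - 1 / (2 * a))
    (v : ℝ) (hv : |v| ≤ tstar) :
    ∀ x : ℝ, ((0 : ℝ) - v) ^ 2 + lam * rho a 0 ≤ (x - v) ^ 2 + lam * rho a x :=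
  stmt10_general lam a ha tstar htstar v hv
end

section
/- Let λ > 0 and a > 0, and define the threshold t* by t* = λa/2 if λ ≤ 1/a², and t* = √λ − 1/(2a) if λ > 1/a². For v ∈ ℝ with |v| > t*, define φ(|v|) = arccos(27λa² / (4(1 + a|v|)³) − 1) and g_{a,λ}(v) = sgn(v) · ( ((1 + a|v|)/3)(1 + 2 cos(φ(|v|)/3 − π/3)) − 1 ) / a. Then g_{a,λ}(v) is a global minimizer over ℝ of the function x ↦ (x − v)² + λ ρ_a(x). -/
open Matrix Filter Topology

/-!
Write `c = 1 + a|v|` and, for `v > 0`, `u = a g + 1`. The stationarity condition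
`2 (g - v) + λ a / (a g + 1)² = 0` of the objective on `x > 0` is the cubic
`u³ - c u² + λ a² / 2 = 0`, and the formula for `g` is Viète's trigonometric expression for its
largest root: `u = c (1 + 2k) / 3` with `4k³ - 3k = -y`, `y = 27 λ a² / (4 c³) - 1`, `k ≥ 1/2`.
Eliminating `λ` by stationarity, the objective gap factors as
`f x - f g = (x - g)² (a x + 2 a (g - v) + 1) / (a x + 1)`, so `g` is a global minimiser on
`x ≥ 0` as soon as `g ≥ 0` and `u ≥ c - 1/2`; negative `x` only do worse, and `v < 0` follows by
symmetry. Since `u ↦ u³ - c u²` increases on `[2c/3, ∞)`, both lower bounds on `u` reduce to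
polynomial inequalities in `λ a²` and `a|v|`, which is what `|v| > t*` provides.
-/

open Real Set

lemma rho_abs (a x : ℝ) : rho a |x| = rho a x := by simp only [rho, abs_abs]

lemma rho_neg (a x : ℝ) : rho a (-x) = rho a x := by simp only [rho, abs_neg]

noncomputable def proxObjective (lam a v x : ℝ) : ℝ := (x - v) ^ 2 + lam * rho a x

section proxObjective

variable {lam a v x g : ℝ}

lemma proxObjective_neg (lam a v x : ℝ) :
    proxObjective lam a (-v) (-x) = proxObjective lam a v x := by
  simp only [proxObjective, rho_neg]
  ring

lemma proxObjective_sign_mul (lam a : ℝ) (hv : v ≠ 0) (x : ℝ) :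
    proxObjective lam a v (Real.sign v * x) = proxObjective lam a |v| x := by
  rcases hv.lt_or_gt with h | h
  · rw [Real.sign_of_neg h, abs_of_neg h, ← proxObjective_neg, neg_one_mul, neg_neg]
  · rw [Real.sign_of_pos h, abs_of_pos h, one_mul]

lemma proxObjective_abs_le (lam a : ℝ) (hv : 0 ≤ v) (x : ℝ) :
    proxObjective lam a v |x| ≤ proxObjective lam a v x := by
  simp only [proxObjective, rho_abs]
  nlinarith [sq_abs x, mul_nonneg hv (sub_nonneg.2 (le_abs_self x))]

lemma proxObjective_sub_of_stationary (ha : 0 < a) (hx : 0 ≤ x) (hg : 0 ≤ g)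
    (hstat : 2 * (g - v) * (a * g + 1) ^ 2 + lam * a = 0) :
    proxObjective lam a v x - proxObjective lam a v g =
      (x - g) ^ 2 * (a * x + 2 * a * (g - v) + 1) / (a * x + 1) := by
  have hx1 : a * x + 1 ≠ 0 := by positivity
  have hg1 : a * g + 1 ≠ 0 := by positivity
  simp only [proxObjective, rho, abs_of_nonneg hx, abs_of_nonneg hg]
  field_simp
  linear_combination (x - g) * hstat

theorem proxObjective_le_of_stationary (ha : 0 < a) (hv : 0 ≤ v) (hg : 0 ≤ g)
    (hstat : 2 * (g - v) * (a * g + 1) ^ 2 + lam * a = 0) (hslope : 0 ≤ 2 * a * (g - v) + 1)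
    (x : ℝ) : proxObjective lam a v g ≤ proxObjective lam a v x := by
  refine le_trans ?_ (proxObjective_abs_le lam a hv x)
  have hx := abs_nonneg x
  have hgap : 0 ≤ (|x| - g) ^ 2 * (a * |x| + 2 * a * (g - v) + 1) / (a * |x| + 1) := by
    have : 0 ≤ a * |x| := by positivity
    exact div_nonneg (mul_nonneg (sq_nonneg _) (by linarith)) (by positivity)
  linarith [proxObjective_sub_of_stationary ha hx hg hstat]

end proxObjective

lemma one_half_le_cos_arccos_div_three_sub_pi_div_three (y : ℝ) :
    1 / 2 ≤ cos (arccos y / 3 - π / 3) := by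
  rw [← cos_abs, ← cos_pi_div_three]
  have := arccos_nonneg y
  have := arccos_le_pi y
  exact cos_le_cos_of_nonneg_of_le_pi (abs_nonneg _) (by linarith [pi_pos])
    (abs_le.2 ⟨by linarith, by linarith⟩)

lemma cos_three_mul_arccos_div_three_sub_pi_div_three {y : ℝ} (hy₁ : -1 ≤ y) (hy₂ : y ≤ 1) :
    4 * cos (arccos y / 3 - π / 3) ^ 3 - 3 * cos (arccos y / 3 - π / 3) = -y := by
  rw [← cos_three_mul, show 3 * (arccos y / 3 - π / 3) = arccos y - π by ring, cos_sub_pi,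
    cos_arccos hy₁ hy₂]

lemma strictMonoOn_pow_three_sub_mul_sq {c : ℝ} (hc : 0 ≤ c) :
    StrictMonoOn (fun x : ℝ => x ^ 3 - c * x ^ 2) (Ici (2 * c / 3)) := by
  intro s hs t ht hst
  simp only [mem_Ici] at hs ht
  have hQ : 0 < t ^ 2 + t * s + s ^ 2 - c * (t + s) := by
    nlinarith [mul_nonneg (sub_nonneg.2 hs) (sub_nonneg.2 ht), sub_pos.2 hst]
  nlinarith [mul_pos (sub_pos.2 hst) hQ]

-- In the scale-free parameters `s = λ a²`, `e = a |v|`.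
def AboveThreshold (s e : ℝ) : Prop :=
  27 * s ≤ 8 * (1 + e) ^ 3 ∧ s ≤ (1 / 2 + e) ^ 2 ∧ (s / 2 ≤ e ∨ 1 / 2 ≤ e)

lemma AboveThreshold.pos {s e : ℝ} (hs : 0 < s) (h : AboveThreshold s e) : 0 < e := by
  rcases h.2.2 with h | h <;> linarith

lemma aboveThreshold_of_half_lt {s e : ℝ} (hs : 0 ≤ s) (he : s / 2 < e) :
    AboveThreshold s e := by
  refine ⟨?_, ?_, .inl he.le⟩
  · have : (1 + s / 2) ^ 3 ≤ (1 + e) ^ 3 := pow_le_pow_left₀ (by linarith) (by linarith) 3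
    nlinarith [mul_nonneg (sq_nonneg (s - 1)) (show 0 ≤ s + 8 by linarith)]
  · nlinarith [sq_nonneg (1 - s)]

lemma aboveThreshold_of_one_lt {w e : ℝ} (hw : 1 < w) (he : w - 1 / 2 < e) :
    AboveThreshold (w ^ 2) e := by
  refine ⟨?_, pow_le_pow_left₀ (by linarith) (by linarith) 2, .inr (by linarith)⟩
  have : (1 / 2 + w) ^ 3 ≤ (1 + e) ^ 3 := pow_le_pow_left₀ (by linarith) (by linarith) 3
  nlinarith [mul_nonneg (sq_nonneg (w - 1)) (show 0 ≤ 8 * w + 1 by linarith)]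

lemma aboveThreshold_of_lt {lam a V : ℝ} (hl : 0 < lam) (ha : 0 < a)
    (hV : (if lam ≤ 1 / a ^ 2 then lam * a / 2 else √lam - 1 / (2 * a)) < V) :
    AboveThreshold (lam * a ^ 2) (a * V) := by
  split_ifs at hV with h
  · exact aboveThreshold_of_half_lt (by positivity) (by nlinarith [mul_lt_mul_of_pos_left hV ha])
  · have hw : 1 < a * √lam := by
      rw [← div_lt_iff₀' ha, lt_sqrt (by positivity), div_pow, one_pow]
      exact not_le.1 h
    have hhalf : a * (1 / (2 * a)) = 1 / 2 := by field_simp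
    have := aboveThreshold_of_one_lt (e := a * V) hw (by nlinarith [mul_lt_mul_of_pos_left hV ha])
    rwa [mul_pow, sq_sqrt hl.le, mul_comm] at this

theorem proxObjective_viete_le {lam a V : ℝ} (hl : 0 ≤ lam) (ha : 0 < a) (hV : 0 ≤ V)
    (hth : AboveThreshold (lam * a ^ 2) (a * V)) (x : ℝ) :
    proxObjective lam a V (((1 + a * V) / 3 *
      (1 + 2 * cos (arccos (27 * lam * a ^ 2 / (4 * (1 + a * V) ^ 3) - 1) / 3 - π / 3)) - 1) / a)
      ≤ proxObjective lam a V x := by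
  obtain ⟨h27, hsq, hone⟩ := hth
  set c := 1 + a * V with hc
  have hc0 : 0 < c := by positivity
  set y := 27 * lam * a ^ 2 / (4 * c ^ 3) - 1 with hy
  have hy' : (y + 1) * (4 * c ^ 3) = 27 * lam * a ^ 2 := by rw [hy]; field_simp; ring
  have hy₁ : -1 ≤ y := by rw [hy]; linarith [show 0 ≤ 27 * lam * a ^ 2 / (4 * c ^ 3) by positivity]
  have hy₂ : y ≤ 1 := by
    rw [hy, sub_le_iff_le_add, div_le_iff₀ (by positivity)]; linarith
  have hk := cos_three_mul_arccos_div_three_sub_pi_div_three hy₁ hy₂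
  have hk₂ := one_half_le_cos_arccos_div_three_sub_pi_div_three y
  set k := cos (arccos y / 3 - π / 3)
  set g := (c / 3 * (1 + 2 * k) - 1) / a
  set u := a * g + 1 with hu
  have hu' : u = c / 3 * (1 + 2 * k) := by simp only [u, g]; field_simp; ring
  have hcubic : u ^ 3 - c * u ^ 2 = -(lam * a ^ 2 / 2) := by
    rw [hu']; linear_combination (2 * c ^ 3 / 27) * hk - (1 / 54) * hy'
  have hmono := strictMonoOn_pow_three_sub_mul_sq hc0.le
  have hu₀ : 2 * c / 3 ≤ u := by rw [hu']; nlinarith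
  have lower_bound : ∀ t, t ^ 3 - c * t ^ 2 ≤ -(lam * a ^ 2 / 2) → t ≤ u := fun t ht => by
    rcases le_total t (2 * c / 3) with h | h
    · linarith
    · exact (hmono.le_iff_le h hu₀).1 (by simpa [hcubic] using ht)
  have hslope : c - 1 / 2 ≤ u := lower_bound _ (by nlinarith)
  have hu₁ : 1 ≤ u := by
    rcases hone with h | h
    · exact lower_bound _ (by linarith)
    · linarith
  have hstat : a * (2 * (g - V) * u ^ 2 + lam * a) = 0 := by
    linear_combination 2 * hcubic - 2 * u ^ 2 * hu + 2 * u ^ 2 * hc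
  exact proxObjective_le_of_stationary ha hV (by nlinarith)
    ((mul_eq_zero.1 hstat).resolve_left ha.ne') (by linarith) x

theorem stmt11 (lam a : ℝ) (hl : 0 < lam) (ha : 0 < a)
    (tstar : ℝ)
    (htstar : tstar = if lam ≤ 1 / a ^ 2 then lam * a / 2 else Real.sqrt lam - 1 / (2 * a))
    (v : ℝ) (hv : |v| > tstar)
    (phi g : ℝ)
    (hphi : phi = Real.arccos (27 * lam * a ^ 2 / (4 * (1 + a * |v|) ^ 3) - 1))
    (hg : g = Real.sign v *
      (((1 + a * |v|) / 3 * (1 + 2 * Real.cos (phi / 3 - Real.pi / 3)) - 1) / a)) :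
    ∀ x : ℝ, (g - v) ^ 2 + lam * rho a g ≤ (x - v) ^ 2 + lam * rho a x := by
  subst htstar hphi hg
  have hth := aboveThreshold_of_lt hl ha hv
  have hv₀ : v ≠ 0 := abs_pos.1 (pos_of_mul_pos_right (hth.pos (by positivity)) ha.le)
  intro x
  change proxObjective lam a v (Real.sign v * _) ≤ proxObjective lam a v x
  have hsign : Real.sign v * Real.sign v = 1 := by
    rcases Real.sign_apply_eq_of_ne_zero v hv₀ with h | h <;> rw [h] <;> norm_num
  calc proxObjective lam a v (Real.sign v * _)
      = proxObjective lam a |v| _ := proxObjective_sign_mul lam a hv₀ _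
    _ ≤ proxObjective lam a |v| (Real.sign v * x) :=
        proxObjective_viete_le hl.le ha (abs_nonneg v) hth _
    _ = proxObjective lam a v x := by
        rw [← proxObjective_sign_mul lam a hv₀, ← mul_assoc, hsign, one_mul]
end

section
/- Let A be a real m × n matrix, b ∈ ℝᵐ, λ > 0, a > 0, and 0 < μ < 1/‖A‖₂², where ‖A‖₂ is the operator (spectral) norm of A. Define C₁(x) = ‖Ax − b‖₂² + λ P_a(x) and C₂(x, z) = μ(C₁(x) − ‖Ax − Az‖₂²) + ‖x − z‖₂². If x* ≥ 0 is a global minimizer of C₁ over {x ∈ ℝⁿ : x ≥ 0}, then C₂(x*, x*) ≤ C₂(x, x*) for every x ≥ 0; that is, x* is a global minimizer of C₂(·, x*) over {x ∈ ℝⁿ : x ≥ 0}. -/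
open Matrix Filter Topology

/-! `C2 (·) z` is a majorization-minimization surrogate: since `mu * ‖A‖² ≤ 1`, the term
`‖x - z‖² - mu * ‖A (x - z)‖²` is nonnegative, so `C2 x z ≥ mu * C1 x`, with equality at `x = z`.
Hence a minimizer of `C1` also minimizes `C2 (·) x*`. -/

lemma sqN_zero (n : ℕ) : sqN (0 : Fin n → ℝ) = 0 := by
  simp [sqN]

lemma sqN_nonneg {n : ℕ} (v : Fin n → ℝ) : 0 ≤ sqN v :=
  Finset.sum_nonneg fun i _ => sq_nonneg (v i)

lemma sqN_eq_norm_sq {n : ℕ} (v : Fin n → ℝ) :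
    sqN v = ‖(EuclideanSpace.equiv (Fin n) ℝ).symm v‖ ^ 2 := by
  rw [EuclideanSpace.real_norm_sq_eq]
  rfl

lemma C2_self {m n : ℕ} (A : Matrix (Fin m) (Fin n) ℝ) (b : Fin m → ℝ) (lam a mu : ℝ)
    (z : Fin n → ℝ) : C2 A b lam a mu z z = mu * C1 A b lam a z := by
  simp only [C2, sub_self, sqN_zero, sub_zero, add_zero]

section L2OperatorNorm

open scoped Matrix.Norms.L2Operator

variable {m n : ℕ}

lemma sqN_mulVec_le (A : Matrix (Fin m) (Fin n) ℝ) (v : Fin n → ℝ) :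
    sqN (A *ᵥ v) ≤ ‖A‖ ^ 2 * sqN v := by
  rw [sqN_eq_norm_sq, sqN_eq_norm_sq, ← mul_pow]
  gcongr
  exact A.l2_opNorm_mulVec _

lemma mul_sq_norm_le_one_of_lt_inv {A : Matrix (Fin m) (Fin n) ℝ} {mu : ℝ}
    (hmu : mu < 1 / ‖A‖ ^ 2) : mu * ‖A‖ ^ 2 ≤ 1 := by
  rcases (sq_nonneg ‖A‖).eq_or_lt with h | h
  · rw [← h, mul_zero]
    exact zero_le_one
  · exact ((lt_div_iff₀ h).mp hmu).le

lemma mul_sqN_mulVec_le {A : Matrix (Fin m) (Fin n) ℝ} {mu : ℝ} (hmu : 0 ≤ mu)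
    (hmuA : mu * ‖A‖ ^ 2 ≤ 1) (v : Fin n → ℝ) : mu * sqN (A *ᵥ v) ≤ sqN v :=
  calc mu * sqN (A *ᵥ v) ≤ mu * (‖A‖ ^ 2 * sqN v) := by gcongr; exact sqN_mulVec_le A v
    _ = (mu * ‖A‖ ^ 2) * sqN v := by ring
    _ ≤ sqN v := mul_le_of_le_one_left (sqN_nonneg v) hmuA

lemma mul_C1_le_C2 (A : Matrix (Fin m) (Fin n) ℝ) (b : Fin m → ℝ) (lam a : ℝ)
    {mu : ℝ} (hmu : 0 ≤ mu) (hmuA : mu * ‖A‖ ^ 2 ≤ 1) (x z : Fin n → ℝ) :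
    mu * C1 A b lam a x ≤ C2 A b lam a mu x z := by
  have h := mul_sqN_mulVec_le hmu hmuA (x - z)
  rw [mulVec_sub] at h
  unfold C2
  linarith

end L2OperatorNorm

open scoped Matrix.Norms.L2Operator in
theorem stmt15_general {m n : ℕ} (A : Matrix (Fin m) (Fin n) ℝ) (b : Fin m → ℝ)
    (lam a mu : ℝ)
    (hmu : 0 < mu) (hmu2 : mu < 1 / ‖A‖ ^ 2)
    (xstar : Fin n → ℝ)
    (hmin : ∀ x : Fin n → ℝ, 0 ≤ x → C1 A b lam a xstar ≤ C1 A b lam a x) :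
    ∀ x : Fin n → ℝ, 0 ≤ x →
      C2 A b lam a mu xstar xstar ≤ C2 A b lam a mu x xstar := by
  intro x hx
  calc C2 A b lam a mu xstar xstar = mu * C1 A b lam a xstar := C2_self A b lam a mu xstar
    _ ≤ mu * C1 A b lam a x := mul_le_mul_of_nonneg_left (hmin x hx) hmu.le
    _ ≤ C2 A b lam a mu x xstar :=
      mul_C1_le_C2 A b lam a hmu.le (mul_sq_norm_le_one_of_lt_inv hmu2) x xstar

open scoped Matrix.Norms.L2Operator in
theorem stmt15 {m n : ℕ} (A : Matrix (Fin m) (Fin n) ℝ) (b : Fin m → ℝ)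
    (lam a mu : ℝ) (hl : 0 < lam) (ha : 0 < a)
    (hmu : 0 < mu) (hmu2 : mu < 1 / ‖A‖ ^ 2)
    (xstar : Fin n → ℝ) (hxs : 0 ≤ xstar)
    (hmin : ∀ x : Fin n → ℝ, 0 ≤ x → C1 A b lam a xstar ≤ C1 A b lam a x) :
    ∀ x : Fin n → ℝ, 0 ≤ x →
      C2 A b lam a mu xstar xstar ≤ C2 A b lam a mu x xstar :=
  stmt15_general A b lam a mu hmu hmu2 xstar hmin
end
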